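/- arXiv:math/0405495 — 3 statements merged into one kernel-verified Lean document; each statement's English description precedes it below -/
import Mathlib

section
/- Let H be an inner product space over the real or complex numbers and let a₁, …, a_m ∈ H be orthonormal vectors. Suppose x₁, …, xₙ ∈ H are nonzero vectors and ρ₁, …, ρ_m ∈ (0,1) satisfy ‖xᵢ − a_k‖ ≤ ρ_k for each i ∈ {1, …, n} and k ∈ {1, …, m}. Then (m − Σ_{k=1}^m ρ_k²)^{1/2} · Σᵢ₌₁ⁿ ‖xᵢ‖ ≤ ‖Σᵢ₌₁ⁿ xᵢ‖, with equality if and only if Σᵢ₌₁ⁿ xᵢ = (Σᵢ₌₁ⁿ ‖xᵢ‖) Σ_{k=1}^m (1 − ρ_k²)^{1/2} a_k. -/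
/-!
Put `r k = √(1 - ρ k ^ 2)` and `c = ∑ k, r k • a k`, so that `‖c‖ ^ 2 = m - ∑ k, ρ k ^ 2`.
Expanding `‖x - a k‖ ^ 2 ≤ ρ k ^ 2` gives `2 re ⟪a k, x⟫ ≥ ‖x‖ ^ 2 + r k ^ 2 ≥ 2 r k ‖x‖`;
weighting by `r k` and summing over `k` and over the `x i` yields
`‖c‖ ^ 2 ∑ ‖x i‖ ≤ re ⟪c, ∑ x i⟫ ≤ ‖c‖ ‖∑ x i‖`. When the outer terms agree, the expansion of
`‖∑ x i - (∑ ‖x i‖) c‖ ^ 2` is squeezed to `0`.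
-/

open RCLike Finset

open scoped InnerProductSpace

section

variable {𝕜 E : Type*} [RCLike 𝕜] [NormedAddCommGroup E] [InnerProductSpace 𝕜 E]

theorem mul_norm_le_re_inner_of_norm_sub_sq_add_sq_le {a x : E} {r : ℝ} (ha : ‖a‖ = 1)
    (h : ‖x - a‖ ^ 2 + r ^ 2 ≤ 1) : r * ‖x‖ ≤ re ⟪a, x⟫_𝕜 := by
  have hexp : ‖x - a‖ ^ 2 = ‖x‖ ^ 2 - 2 * re ⟪a, x⟫_𝕜 + 1 := by
    rw [norm_sub_sq (𝕜 := 𝕜), inner_re_symm, ha, one_pow]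
  nlinarith [sq_nonneg (‖x‖ - r)]

theorem Orthonormal.norm_sum_ofReal_smul_sq {ι : Type*} {a : ι → E} (ha : Orthonormal 𝕜 a)
    (r : ι → ℝ) (s : Finset ι) : ‖∑ k ∈ s, (r k : 𝕜) • a k‖ ^ 2 = ∑ k ∈ s, r k ^ 2 := by
  have h : ((‖∑ k ∈ s, (r k : 𝕜) • a k‖ : ℝ) : 𝕜) ^ 2 = ((∑ k ∈ s, r k ^ 2 : ℝ) : 𝕜) := by
    rw [← inner_self_eq_norm_sq_to_K, ha.inner_sum]
    push_cast
    simp only [conj_ofReal, sq]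
  exact_mod_cast h

theorem sum_sq_mul_norm_le_re_inner_sum_ofReal_smul {ι : Type*} {a : ι → E} {r : ι → ℝ}
    {s : Finset ι} {x : E} (hr : ∀ k ∈ s, 0 ≤ r k) (h : ∀ k ∈ s, r k * ‖x‖ ≤ re ⟪a k, x⟫_𝕜) :
    (∑ k ∈ s, r k ^ 2) * ‖x‖ ≤ re ⟪∑ k ∈ s, (r k : 𝕜) • a k, x⟫_𝕜 := by
  rw [sum_inner, map_sum, sum_mul]
  refine sum_le_sum fun k hk => ?_
  rw [inner_smul_left, conj_ofReal, re_ofReal_mul, sq, mul_assoc]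
  exact mul_le_mul_of_nonneg_left (h k hk) (hr k hk)

theorem mul_norm_le_norm_of_mul_norm_sq_le_re_inner {c y : E} {S : ℝ}
    (h : S * ‖c‖ ^ 2 ≤ re ⟪c, y⟫_𝕜) : S * ‖c‖ ≤ ‖y‖ := by
  rcases (norm_nonneg c).eq_or_lt with hc | hc
  · simp [← hc]
  · refine le_of_mul_le_mul_left ?_ hc
    calc ‖c‖ * (S * ‖c‖) = S * ‖c‖ ^ 2 := by ring
      _ ≤ re ⟪c, y⟫_𝕜 := h
      _ ≤ ‖c‖ * ‖y‖ := re_inner_le_norm c y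

theorem eq_ofReal_smul_of_mul_norm_sq_le_re_inner {c y : E} {S : ℝ} (hS : 0 ≤ S)
    (h : S * ‖c‖ ^ 2 ≤ re ⟪c, y⟫_𝕜) (hy : ‖y‖ ≤ S * ‖c‖) : y = (S : 𝕜) • c := by
  have hexp : ‖y - (S : 𝕜) • c‖ ^ 2 = ‖y‖ ^ 2 - 2 * S * re ⟪c, y⟫_𝕜 + S ^ 2 * ‖c‖ ^ 2 := by
    rw [norm_sub_sq (𝕜 := 𝕜), inner_smul_right, re_ofReal_mul, inner_re_symm, norm_smul,
      norm_ofReal, abs_of_nonneg hS]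
    ring
  have hsq : ‖y‖ ^ 2 ≤ (S * ‖c‖) ^ 2 := pow_le_pow_left₀ (norm_nonneg y) hy 2
  have hzero : ‖y - (S : 𝕜) • c‖ ^ 2 ≤ 0 := by nlinarith
  rw [← sub_eq_zero, ← norm_eq_zero]
  exact pow_eq_zero_iff two_ne_zero |>.mp (le_antisymm hzero (sq_nonneg _))

end

theorem reverse_triangle_balls_orthonormal_general {𝕜 H : Type*} [RCLike 𝕜]
    [NormedAddCommGroup H] [InnerProductSpace 𝕜 H] {n m : ℕ}
    (x : Fin n → H)
    (a : Fin m → H) (ha : Orthonormal 𝕜 a)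
    (ρ : Fin m → ℝ) (hρ : ∀ k, ρ k ∈ Set.Ioo (0 : ℝ) 1)
    (h : ∀ i k, ‖x i - a k‖ ≤ ρ k) :
    Real.sqrt ((m : ℝ) - ∑ k, ρ k ^ 2) * ∑ i, ‖x i‖ ≤ ‖∑ i, x i‖ ∧
      (Real.sqrt ((m : ℝ) - ∑ k, ρ k ^ 2) * ∑ i, ‖x i‖ = ‖∑ i, x i‖ ↔
        ∑ i, x i = ((∑ i, ‖x i‖ : ℝ) : 𝕜) •
          ∑ k, ((Real.sqrt (1 - ρ k ^ 2) : ℝ) : 𝕜) • a k) := by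
  set r : Fin m → ℝ := fun k => Real.sqrt (1 - ρ k ^ 2)
  set c : H := ∑ k, (r k : 𝕜) • a k
  have hr_sq : ∀ k, r k ^ 2 = 1 - ρ k ^ 2 := fun k =>
    Real.sq_sqrt (by nlinarith [(hρ k).1, (hρ k).2])
  have hc : ‖c‖ = Real.sqrt ((m : ℝ) - ∑ k, ρ k ^ 2) := by
    rw [← Real.sqrt_sq (norm_nonneg c), ha.norm_sum_ofReal_smul_sq]
    simp [hr_sq, sum_sub_distrib]
  have hpoint : ∀ i, (∑ k, r k ^ 2) * ‖x i‖ ≤ re ⟪c, x i⟫_𝕜 := fun i =>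
    sum_sq_mul_norm_le_re_inner_sum_ofReal_smul (fun k _ => Real.sqrt_nonneg _) fun k _ =>
      mul_norm_le_re_inner_of_norm_sub_sq_add_sq_le (ha.norm_eq_one k) (by
        nlinarith [hr_sq k, h i k, norm_nonneg (x i - a k)])
  have hkey : (∑ i, ‖x i‖) * ‖c‖ ^ 2 ≤ re ⟪c, ∑ i, x i⟫_𝕜 := by
    rw [inner_sum, map_sum, ha.norm_sum_ofReal_smul_sq, sum_mul]
    exact sum_le_sum fun i _ => (mul_comm _ _).trans_le (hpoint i)
  rw [← hc, mul_comm]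
  refine ⟨mul_norm_le_norm_of_mul_norm_sq_le_re_inner hkey, fun heq => ?_, fun heq => ?_⟩
  · exact eq_ofReal_smul_of_mul_norm_sq_le_re_inner (sum_nonneg fun i _ => norm_nonneg _) hkey
      heq.ge
  · rw [heq, norm_smul, norm_ofReal, abs_of_nonneg (sum_nonneg fun i _ => norm_nonneg _)]

theorem reverse_triangle_balls_orthonormal {𝕜 H : Type*} [RCLike 𝕜]
    [NormedAddCommGroup H] [InnerProductSpace 𝕜 H] {n m : ℕ}
    (x : Fin n → H) (hx : ∀ i, x i ≠ 0)
    (a : Fin m → H) (ha : Orthonormal 𝕜 a)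
    (ρ : Fin m → ℝ) (hρ : ∀ k, ρ k ∈ Set.Ioo (0 : ℝ) 1)
    (h : ∀ i k, ‖x i - a k‖ ≤ ρ k) :
    Real.sqrt ((m : ℝ) - ∑ k, ρ k ^ 2) * ∑ i, ‖x i‖ ≤ ‖∑ i, x i‖ ∧
      (Real.sqrt ((m : ℝ) - ∑ k, ρ k ^ 2) * ∑ i, ‖x i‖ = ‖∑ i, x i‖ ↔
        ∑ i, x i = ((∑ i, ‖x i‖ : ℝ) : 𝕜) •
          ∑ k, ((Real.sqrt (1 - ρ k ^ 2) : ℝ) : 𝕜) • a k) :=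
  reverse_triangle_balls_orthonormal_general x a ha ρ hρ h
end

section
/- Let H be an inner product space over the real or complex numbers, let a ∈ H be a unit vector, and let M ≥ m > 0. If x₁, …, xₙ ∈ H satisfy Re⟨M a − xᵢ, xᵢ − m a⟩ ≥ 0 for each i ∈ {1, …, n}, then (2√(mM)/(m + M)) · Σᵢ₌₁ⁿ ‖xᵢ‖ ≤ ‖Σᵢ₌₁ⁿ xᵢ‖, with equality if and only if Σᵢ₌₁ⁿ xᵢ = (2√(mM)/(m + M)) (Σᵢ₌₁ⁿ ‖xᵢ‖) a. -/
open RCLike Finset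

/-!
For a unit vector `a`, the hypothesis `Re⟪M a - x, x - m a⟫ ≥ 0` expands to
`‖x‖² + m M ≤ (m + M) Re⟪a, x⟫`, and AM-GM (`2 √(m M) ‖x‖ ≤ ‖x‖² + m M`) turns it into
`r ‖x‖ ≤ Re⟪a, x⟫` with `r = 2 √(m M) / (m + M)`. Summing and applying Cauchy-Schwarz gives
`r ∑ ‖xᵢ‖ ≤ Re⟪a, ∑ xᵢ⟫ ≤ ‖∑ xᵢ‖`; equality forces `Re⟪a, s⟫ = ‖s‖` for `s = ∑ xᵢ`, and then
`‖s - ‖s‖ a‖² = 0`.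
-/

section
variable {𝕜 H : Type*} [RCLike 𝕜] [NormedAddCommGroup H] [InnerProductSpace 𝕜 H]

theorem re_inner_smul_sub_sub_smul (a x : H) (m M : ℝ) :
    re (inner 𝕜 ((M : 𝕜) • a - x) (x - (m : 𝕜) • a)) =
      (m + M) * re (inner 𝕜 a x) - ‖x‖ ^ 2 - m * M * ‖a‖ ^ 2 := by
  simp only [inner_sub_left, inner_sub_right, inner_smul_left, inner_smul_right, map_sub,
    conj_ofReal, re_ofReal_mul, inner_self_eq_norm_sq, inner_re_symm x a]
  ring

theorem mul_norm_le_re_inner_of_re_inner_smul_sub_sub_smul_nonneg {a x : H} (ha : ‖a‖ = 1)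
    {m M : ℝ} (hmM : 0 ≤ m * M) (hm_add : 0 < m + M)
    (h : 0 ≤ re (inner 𝕜 ((M : 𝕜) • a - x) (x - (m : 𝕜) • a))) :
    2 * Real.sqrt (m * M) / (m + M) * ‖x‖ ≤ re (inner 𝕜 a x) := by
  rw [re_inner_smul_sub_sub_smul, ha, one_pow, mul_one] at h
  have am_gm : 2 * Real.sqrt (m * M) * ‖x‖ ≤ ‖x‖ ^ 2 + m * M := by
    nlinarith [sq_nonneg (‖x‖ - Real.sqrt (m * M)), Real.sq_sqrt hmM]
  rw [div_mul_eq_mul_div, div_le_iff₀ hm_add]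
  linarith

theorem eq_norm_smul_of_re_inner_eq_norm {a s : H} (ha : ‖a‖ = 1)
    (h : re (inner 𝕜 a s) = ‖s‖) : s = (‖s‖ : 𝕜) • a := by
  have : ‖s - (‖s‖ : 𝕜) • a‖ ^ 2 = 0 := by
    rw [@norm_sub_sq 𝕜, inner_smul_right, re_ofReal_mul, inner_re_symm s a, h, norm_smul,
      norm_ofReal, abs_norm, ha]
    ring
  rwa [sq_eq_zero_iff, norm_eq_zero, sub_eq_zero] at this

theorem re_inner_le_norm_of_norm_eq_one {a : H} (ha : ‖a‖ = 1) (y : H) :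
    re (inner 𝕜 a y) ≤ ‖y‖ := by
  simpa [ha] using re_inner_le_norm a y

variable {ι : Type*} {s : Finset ι} {x : ι → H} {a : H} {r : ℝ}

theorem mul_sum_norm_le_re_inner_sum (h : ∀ i ∈ s, r * ‖x i‖ ≤ re (inner 𝕜 a (x i))) :
    r * ∑ i ∈ s, ‖x i‖ ≤ re (inner 𝕜 a (∑ i ∈ s, x i)) := by
  rw [inner_sum, map_sum, mul_sum]
  exact sum_le_sum h

theorem mul_sum_norm_le_norm_sum (ha : ‖a‖ = 1)
    (h : ∀ i ∈ s, r * ‖x i‖ ≤ re (inner 𝕜 a (x i))) :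
    r * ∑ i ∈ s, ‖x i‖ ≤ ‖∑ i ∈ s, x i‖ :=
  (mul_sum_norm_le_re_inner_sum h).trans (re_inner_le_norm_of_norm_eq_one ha _)

theorem mul_sum_norm_eq_norm_sum_iff (ha : ‖a‖ = 1) (hr : 0 ≤ r)
    (h : ∀ i ∈ s, r * ‖x i‖ ≤ re (inner 𝕜 a (x i))) :
    r * ∑ i ∈ s, ‖x i‖ = ‖∑ i ∈ s, x i‖ ↔
      ∑ i ∈ s, x i = ((r * ∑ i ∈ s, ‖x i‖ : ℝ) : 𝕜) • a := by
  constructor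
  · intro heq
    rw [heq]
    exact eq_norm_smul_of_re_inner_eq_norm ha <| le_antisymm
      (re_inner_le_norm_of_norm_eq_one ha _) (heq ▸ mul_sum_norm_le_re_inner_sum h)
  · intro heq
    rw [heq, norm_smul, norm_ofReal, ha, mul_one,
      abs_of_nonneg (mul_nonneg hr (sum_nonneg fun i _ => norm_nonneg _))]

end

theorem reverse_triangle_mM {𝕜 H : Type*} [RCLike 𝕜] [NormedAddCommGroup H]
    [InnerProductSpace 𝕜 H] {n : ℕ} (x : Fin n → H)
    (a : H) (ha : ‖a‖ = 1) (m M : ℝ) (hm : 0 < m) (hmM : m ≤ M)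
    (h : ∀ i, 0 ≤ re (inner 𝕜 ((M : 𝕜) • a - x i) (x i - (m : 𝕜) • a) : 𝕜)) :
    2 * Real.sqrt (m * M) / (m + M) * ∑ i, ‖x i‖ ≤ ‖∑ i, x i‖ ∧
      (2 * Real.sqrt (m * M) / (m + M) * ∑ i, ‖x i‖ = ‖∑ i, x i‖ ↔
        ∑ i, x i = ((2 * Real.sqrt (m * M) / (m + M) * ∑ i, ‖x i‖ : ℝ) : 𝕜) • a) := by
  have hm_add : 0 < m + M := by linarith
  have hr : 0 ≤ 2 * Real.sqrt (m * M) / (m + M) := by positivity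
  have key : ∀ i ∈ univ, 2 * Real.sqrt (m * M) / (m + M) * ‖x i‖ ≤ re (inner 𝕜 a (x i)) :=
    fun i _ => mul_norm_le_re_inner_of_re_inner_smul_sub_sub_smul_nonneg ha
      (mul_nonneg hm.le (hm.le.trans hmM)) hm_add (h i)
  exact ⟨mul_sum_norm_le_norm_sum ha key, mul_sum_norm_eq_norm_sum_iff ha hr key⟩
end

section
/- Let H be an inner product space over the real or complex numbers, let e ∈ H with ‖e‖ = 1, let ρ ∈ (0,1), and suppose x₁, …, xₙ ∈ H satisfy ‖xᵢ − e‖ ≤ ρ for each i ∈ {1, …, n}. Then 0 ≤ Σᵢ₌₁ⁿ ‖xᵢ‖ − ‖Σᵢ₌₁ⁿ xᵢ‖ ≤ (ρ² / (√(1 − ρ²)(1 + √(1 − ρ²)))) · Re⟨Σᵢ₌₁ⁿ xᵢ, e⟩, and the latter quantity is at most (ρ² / (√(1 − ρ²)(1 + √(1 − ρ²)))) · ‖Σᵢ₌₁ⁿ xᵢ‖. -/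
/-!
Each `xᵢ` lies in the ball of radius `ρ` about the unit vector `e`, so with `t = √(1 - ρ²)`
expanding `‖xᵢ - e‖² ≤ ρ²` and AM-GM give `t ‖xᵢ‖ ≤ Re ⟪xᵢ, e⟫`. Summing, `∑ ‖xᵢ‖ ≤ Re ⟪∑ xᵢ, e⟫ / t`,
while Cauchy–Schwarz gives `Re ⟪∑ xᵢ, e⟫ ≤ ‖∑ xᵢ‖`; subtracting yields the bound with constant
`(1 - t) / t`, which equals `ρ² / (t (1 + t))` because `ρ² = (1 - t)(1 + t)`.
-/

open RCLike Finset

section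

variable {𝕜 H : Type*} [RCLike 𝕜] [NormedAddCommGroup H] [InnerProductSpace 𝕜 H]

theorem re_inner_le_norm_of_norm_le_one (x : H) {e : H} (he : ‖e‖ ≤ 1) :
    re (inner 𝕜 x e) ≤ ‖x‖ :=
  calc re (inner 𝕜 x e) ≤ ‖x‖ * ‖e‖ := re_inner_le_norm x e
    _ ≤ ‖x‖ := mul_le_of_le_one_right (norm_nonneg x) he

theorem sqrt_one_sub_sq_mul_norm_le_re_inner {x e : H} (he : ‖e‖ = 1) {ρ : ℝ} (hρ : ρ ^ 2 ≤ 1)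
    (hx : ‖x - e‖ ≤ ρ) : √(1 - ρ ^ 2) * ‖x‖ ≤ re (inner 𝕜 x e) := by
  have ht : √(1 - ρ ^ 2) ^ 2 = 1 - ρ ^ 2 := Real.sq_sqrt (sub_nonneg.2 hρ)
  have hdist : ‖x‖ ^ 2 - 2 * re (inner 𝕜 x e) + 1 ≤ ρ ^ 2 := by
    have hexpand := norm_sub_sq (𝕜 := 𝕜) x e
    rw [he, one_pow] at hexpand
    rw [← hexpand]
    exact pow_le_pow_left₀ (norm_nonneg _) hx 2
  nlinarith [sq_nonneg (‖x‖ - √(1 - ρ ^ 2))]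

theorem sum_norm_sub_norm_sum_le_of_mul_norm_le_re_inner {ι : Type*} (s : Finset ι) (x : ι → H)
    {e : H} (he : ‖e‖ ≤ 1) {t : ℝ} (ht : 0 < t) (hx : ∀ i ∈ s, t * ‖x i‖ ≤ re (inner 𝕜 (x i) e)) :
    ∑ i ∈ s, ‖x i‖ - ‖∑ i ∈ s, x i‖ ≤ (1 - t) / t * re (inner 𝕜 (∑ i ∈ s, x i) e) := by
  have hsum : t * ∑ i ∈ s, ‖x i‖ ≤ re (inner 𝕜 (∑ i ∈ s, x i) e) := by
    rw [mul_sum, sum_inner, map_sum]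
    exact sum_le_sum hx
  set R := re (inner 𝕜 (∑ i ∈ s, x i) e)
  have hR : R ≤ ‖∑ i ∈ s, x i‖ := re_inner_le_norm_of_norm_le_one _ he
  have hexpand : (1 - t) / t * R = R / t - R := by field_simp
  rw [hexpand]
  linarith [(le_div_iff₀' ht).2 hsum]

end

theorem sq_div_mul_one_add_eq {ρ t : ℝ} (ht : 0 < t) (hρt : t ^ 2 = 1 - ρ ^ 2) :
    ρ ^ 2 / (t * (1 + t)) = (1 - t) / t := by
  rw [div_eq_div_iff (by positivity) ht.ne']
  linear_combination t * hρt

theorem additive_reverse_triangle_ball {𝕜 H : Type*} [RCLike 𝕜]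
    [NormedAddCommGroup H] [InnerProductSpace 𝕜 H] {n : ℕ}
    (e : H) (he : ‖e‖ = 1) (ρ : ℝ) (hρ : ρ ∈ Set.Ioo (0 : ℝ) 1)
    (x : Fin n → H) (h : ∀ i, ‖x i - e‖ ≤ ρ) :
    0 ≤ ∑ i, ‖x i‖ - ‖∑ i, x i‖ ∧
      ∑ i, ‖x i‖ - ‖∑ i, x i‖ ≤
        ρ ^ 2 / (Real.sqrt (1 - ρ ^ 2) * (1 + Real.sqrt (1 - ρ ^ 2))) *
          re (inner 𝕜 (∑ i, x i) e : 𝕜) ∧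
      ρ ^ 2 / (Real.sqrt (1 - ρ ^ 2) * (1 + Real.sqrt (1 - ρ ^ 2))) *
          re (inner 𝕜 (∑ i, x i) e : 𝕜) ≤
        ρ ^ 2 / (Real.sqrt (1 - ρ ^ 2) * (1 + Real.sqrt (1 - ρ ^ 2))) *
          ‖∑ i, x i‖ := by
  obtain ⟨hρ0, hρ1⟩ := hρ
  have hρsq : ρ ^ 2 < 1 := by nlinarith
  have ht : 0 < √(1 - ρ ^ 2) := Real.sqrt_pos.2 (sub_pos.2 hρsq)
  refine ⟨sub_nonneg.2 (norm_sum_le _ _), ?_, ?_⟩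
  · rw [sq_div_mul_one_add_eq ht (Real.sq_sqrt (sub_pos.2 hρsq).le)]
    exact sum_norm_sub_norm_sum_le_of_mul_norm_le_re_inner _ _ he.le ht fun i _ =>
      sqrt_one_sub_sq_mul_norm_le_re_inner he hρsq.le (h i)
  · exact mul_le_mul_of_nonneg_left (re_inner_le_norm_of_norm_le_one _ he.le) (by positivity)
end
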